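/- Constants relations for lower characteristic (1,0): with γ = Θ[0,0;1,0](0,0) and δ = Θ[0,1;1,0](0,0), one has θ[0,0;1,0](0,0) · θ[0,0;0,0](0,0) = γ² + δ² and θ[0,1;1,0](0,0) · θ[0,1;0,0](0,0) = 2γδ. -/

import Mathlib

open Complex

/-- Genus-two theta function with real characteristics `a c b d`
(upper characteristics `a, c`, lower characteristics `b, d`),
moduli `τ₁ τ₂ τ₁₂` and complex arguments `x y`. -/
noncomputable def theta (τ₁ τ₂ τ₁₂ : ℂ) (a c b d : ℝ) (x y : ℂ) : ℂ :=
  ∑' p : ℤ × ℤ,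
    Complex.exp
      ((Real.pi : ℂ) * Complex.I *
          (τ₁ * ((p.1 : ℂ) + (a : ℂ) / 2) ^ 2 + τ₂ * ((p.2 : ℂ) + (c : ℂ) / 2) ^ 2 +
            2 * τ₁₂ * ((p.1 : ℂ) + (a : ℂ) / 2) * ((p.2 : ℂ) + (c : ℂ) / 2)) +
        2 * (Real.pi : ℂ) * Complex.I *
          (((p.1 : ℂ) + (a : ℂ) / 2) * (x + (b : ℂ) / 2) +
            ((p.2 : ℂ) + (c : ℂ) / 2) * (y + (d : ℂ) / 2)))

/-- The same theta function with doubled moduli `2τ₁, 2τ₂, 2τ₁₂`. -/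
noncomputable def Theta2 (τ₁ τ₂ τ₁₂ : ℂ) (a c b d : ℝ) (x y : ℂ) : ℂ :=
  theta (2 * τ₁) (2 * τ₂) (2 * τ₁₂) a c b d x y

/-! For summation vectors `w = p + (a, c)/2` and `w' = q + (a', c')/2` of two theta constants put
`u = (w + w')/2` and `v = (w - w')/2`. The quadratic form satisfies `Q w + Q w' = 2 Q u + 2 Q v`,
so the product of the two series splits, along the class of `p - q` in `ℤ² / 2ℤ²`, into four
products of theta constants with doubled moduli (`theta_mul_theta`). For the characteristics at
hand the two classes with odd first coordinate give theta constants of odd characteristic, which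
vanish, and the other two give `γ² + δ²` and `2γδ`. -/

noncomputable def thetaTerm (τ₁ τ₂ τ₁₂ : ℂ) (a c b d : ℝ) (x y : ℂ) (p : ℤ × ℤ) : ℂ :=
  Complex.exp
    ((Real.pi : ℂ) * Complex.I *
        (τ₁ * ((p.1 : ℂ) + (a : ℂ) / 2) ^ 2 + τ₂ * ((p.2 : ℂ) + (c : ℂ) / 2) ^ 2 +
          2 * τ₁₂ * ((p.1 : ℂ) + (a : ℂ) / 2) * ((p.2 : ℂ) + (c : ℂ) / 2)) +
      2 * (Real.pi : ℂ) * Complex.I *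
        (((p.1 : ℂ) + (a : ℂ) / 2) * (x + (b : ℂ) / 2) +
          ((p.2 : ℂ) + (c : ℂ) / 2) * (y + (d : ℂ) / 2)))

theorem theta_eq_tsum_thetaTerm (τ₁ τ₂ τ₁₂ : ℂ) (a c b d : ℝ) (x y : ℂ) :
    theta τ₁ τ₂ τ₁₂ a c b d x y = ∑' p, thetaTerm τ₁ τ₂ τ₁₂ a c b d x y p := rfl

theorem norm_thetaTerm (τ₁ τ₂ τ₁₂ : ℂ) (a c b d : ℝ) (p : ℤ × ℤ) :
    ‖thetaTerm τ₁ τ₂ τ₁₂ a c b d 0 0 p‖ =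
      Real.exp (-Real.pi * (τ₁.im * (p.1 + a / 2) ^ 2 + τ₂.im * (p.2 + c / 2) ^ 2 +
        2 * τ₁₂.im * (p.1 + a / 2) * (p.2 + c / 2))) := by
  rw [thetaTerm, Complex.norm_exp]
  congr 1
  simp [Complex.mul_re, Complex.mul_im, pow_two]

theorem exists_pos_mul_le_quadratic {A B C : ℝ} (hA : 0 < A) (hB : 0 < B) (h : C ^ 2 < A * B) :
    ∃ ε > 0, ∀ u v : ℝ, ε * (u ^ 2 + v ^ 2) ≤ A * u ^ 2 + B * v ^ 2 + 2 * C * u * v := by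
  refine ⟨(A * B - C ^ 2) / (A + B), by apply div_pos <;> linarith, fun u v => ?_⟩
  rw [div_mul_eq_mul_div, div_le_iff₀ (by linarith)]
  -- `(A + B) Q(u, v) - (AB - C²)(u² + v²) = (Au + Cv)² + (Bv + Cu)²`
  nlinarith [sq_nonneg (A * u + C * v), sq_nonneg (B * v + C * u)]

theorem summable_exp_neg_mul_add_sq {c : ℝ} (hc : 0 < c) (α : ℝ) :
    Summable fun n : ℤ => Real.exp (-c * (n + α) ^ 2) := by
  have hτ : 0 < (c / Real.pi * I : ℂ).im := by
    simp only [mul_im, div_ofReal_re, ofReal_re, I_im, mul_one, div_ofReal_im, ofReal_im,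
      zero_div, I_re, mul_zero, add_zero]
    positivity
  -- `exp (-c (n + α)²) = exp (-c α²) ‖jacobiTheta₂_term n (i c α / π) (i c / π)‖`
  refine (((summable_jacobiTheta₂_term_iff (c * α / Real.pi * I) _).mpr hτ).norm.mul_left
    (Real.exp (-c * α ^ 2))).congr fun n => ?_
  rw [norm_jacobiTheta₂_term, ← Real.exp_add]
  congr 1
  simp only [neg_mul, mul_im, div_ofReal_re, ofReal_re, I_im, mul_one, div_ofReal_im, ofReal_im,
    zero_div, I_re, mul_zero, add_zero, mul_re, sub_zero, zero_mul]
  field_simp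
  ring

def addSubParityEquiv : (Bool × Bool) × (ℤ × ℤ) × (ℤ × ℤ) ≃ (ℤ × ℤ) × (ℤ × ℤ) where
  toFun x := ((x.2.1.1 + x.2.2.1 + x.1.1.toNat, x.2.1.2 + x.2.2.2 + x.1.2.toNat),
    (x.2.1.1 - x.2.2.1, x.2.1.2 - x.2.2.2))
  invFun y := ((decide ((y.1.1 - y.2.1) % 2 = 1), decide ((y.1.2 - y.2.2) % 2 = 1)),
    (y.2.1 + (y.1.1 - y.2.1) / 2, y.2.2 + (y.1.2 - y.2.2) / 2),
    ((y.1.1 - y.2.1) / 2, (y.1.2 - y.2.2) / 2))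
  left_inv := by
    rintro ⟨⟨_ | _, _ | _⟩, ⟨r₁, r₂⟩, s₁, s₂⟩ <;> simp <;> omega
  right_inv := by
    rintro ⟨⟨m₁, m₂⟩, n₁, n₂⟩
    obtain h₁ | h₁ := Int.emod_two_eq (m₁ - n₁) <;> obtain h₂ | h₂ := Int.emod_two_eq (m₂ - n₂) <;>
      simp [h₁, h₂] <;> omega

theorem summable_norm_thetaTerm {τ₁ τ₂ τ₁₂ : ℂ} (h₁ : 0 < τ₁.im) (h₂ : 0 < τ₂.im)
    (h : τ₁₂.im ^ 2 < τ₁.im * τ₂.im) (a c b d : ℝ) :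
    Summable fun p => ‖thetaTerm τ₁ τ₂ τ₁₂ a c b d 0 0 p‖ := by
  obtain ⟨ε, hε, hQ⟩ := exists_pos_mul_le_quadratic h₁ h₂ h
  have hπε : 0 < Real.pi * ε := mul_pos Real.pi_pos hε
  refine ((summable_exp_neg_mul_add_sq hπε (a / 2)).mul_of_nonneg
    (summable_exp_neg_mul_add_sq hπε (c / 2)) (fun _ => (Real.exp_pos _).le)
    (fun _ => (Real.exp_pos _).le)).of_nonneg_of_le (fun _ => norm_nonneg _) fun p => ?_
  rw [norm_thetaTerm, ← Real.exp_add]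
  gcongr
  nlinarith [hQ (p.1 + a / 2) (p.2 + c / 2), Real.pi_pos]

theorem thetaTerm_mul_thetaTerm (τ₁ τ₂ τ₁₂ : ℂ) (a c b d a' c' b' d' : ℝ) (ε : Bool × Bool)
    (r s : ℤ × ℤ) :
    thetaTerm τ₁ τ₂ τ₁₂ a c b d 0 0 (addSubParityEquiv (ε, r, s)).1 *
        thetaTerm τ₁ τ₂ τ₁₂ a' c' b' d' 0 0 (addSubParityEquiv (ε, r, s)).2 =
      thetaTerm (2 * τ₁) (2 * τ₂) (2 * τ₁₂) ((a + a') / 2 + ε.1.toNat) ((c + c') / 2 + ε.2.toNat)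
          (b + b') (d + d') 0 0 r *
        thetaTerm (2 * τ₁) (2 * τ₂) (2 * τ₁₂) ((a - a') / 2 + ε.1.toNat)
          ((c - c') / 2 + ε.2.toNat) (b - b') (d - d') 0 0 s := by
  simp only [thetaTerm, addSubParityEquiv, Equiv.coe_fn_mk, ← Complex.exp_add]
  congr 1
  push_cast
  ring

theorem theta_mul_theta {τ₁ τ₂ τ₁₂ : ℂ} (h₁ : 0 < τ₁.im) (h₂ : 0 < τ₂.im)
    (h : τ₁₂.im ^ 2 < τ₁.im * τ₂.im) (a c b d a' c' b' d' : ℝ) :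
    theta τ₁ τ₂ τ₁₂ a c b d 0 0 * theta τ₁ τ₂ τ₁₂ a' c' b' d' 0 0 =
      ∑ ε : Bool × Bool,
        Theta2 τ₁ τ₂ τ₁₂ ((a + a') / 2 + ε.1.toNat) ((c + c') / 2 + ε.2.toNat) (b + b') (d + d')
            0 0 *
          Theta2 τ₁ τ₂ τ₁₂ ((a - a') / 2 + ε.1.toNat) ((c - c') / 2 + ε.2.toNat) (b - b')
            (d - d') 0 0 := by
  have h₁' : 0 < (2 * τ₁).im := by simpa
  have h₂' : 0 < (2 * τ₂).im := by simpa
  have h' : (2 * τ₁₂).im ^ 2 < (2 * τ₁).im * (2 * τ₂).im := by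
    simp only [mul_im, re_ofNat, im_ofNat, zero_mul, add_zero]
    nlinarith
  have hf := summable_norm_thetaTerm h₁ h₂ h a c b d
  have hg := summable_norm_thetaTerm h₁ h₂ h a' c' b' d'
  have hs := addSubParityEquiv.summable_iff.mpr (summable_mul_of_summable_norm hf hg)
  rw [Function.comp_def] at hs
  rw [theta_eq_tsum_thetaTerm, theta_eq_tsum_thetaTerm, tsum_mul_tsum_of_summable_norm hf hg,
    ← addSubParityEquiv.tsum_eq, hs.tsum_prod, tsum_fintype]
  refine Finset.sum_congr rfl fun ε _ => ?_
  rw [Theta2, Theta2, theta_eq_tsum_thetaTerm, theta_eq_tsum_thetaTerm,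
    tsum_mul_tsum_of_summable_norm (summable_norm_thetaTerm h₁' h₂' h' _ _ _ _)
      (summable_norm_thetaTerm h₁' h₂' h' _ _ _ _)]
  exact tsum_congr fun rs => thetaTerm_mul_thetaTerm ..

theorem theta_eq_zero_of_odd (τ₁ τ₂ τ₁₂ : ℂ) (a c b d : ℤ) (h : Odd (a * b + c * d)) :
    theta τ₁ τ₂ τ₁₂ a c b d 0 0 = 0 := by
  obtain ⟨k, hk⟩ := h
  have hk' : ((a * b + c * d : ℤ) : ℂ) = 2 * k + 1 := by exact_mod_cast hk
  -- `p ↦ -p - (a, c)` negates `p + (a, c)/2`, multiplying the term by `exp (-πi (ab + cd)) = -1`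
  let e := (Equiv.neg (ℤ × ℤ)).trans (Equiv.subRight (a, c))
  have hneg : ∀ p, thetaTerm τ₁ τ₂ τ₁₂ a c b d 0 0 (e p) = -thetaTerm τ₁ τ₂ τ₁₂ a c b d 0 0 p := by
    intro p
    rw [thetaTerm, thetaTerm, ← Complex.exp_add_pi_mul_I, Complex.exp_eq_exp_iff_exists_int]
    refine ⟨-(p.1 * b + p.2 * d) - k - 1, ?_⟩
    simp only [e, Equiv.trans_apply, Equiv.neg_apply, Equiv.subRight_apply, Prod.fst_sub,
      Prod.snd_sub, Prod.fst_neg, Prod.snd_neg]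
    push_cast at hk' ⊢
    linear_combination (-Real.pi * I) * hk'
  have h := e.tsum_eq (thetaTerm τ₁ τ₂ τ₁₂ a c b d 0 0)
  rw [tsum_congr hneg, tsum_neg] at h
  rw [theta_eq_tsum_thetaTerm]
  linear_combination -h / 2

theorem theta_add_two_mul (τ₁ τ₂ τ₁₂ : ℂ) (a c b d : ℝ) (x y : ℂ) (k l : ℤ) :
    theta τ₁ τ₂ τ₁₂ (a + 2 * k) (c + 2 * l) b d x y = theta τ₁ τ₂ τ₁₂ a c b d x y := by
  rw [theta_eq_tsum_thetaTerm, theta_eq_tsum_thetaTerm, ← (Equiv.subRight (k, l)).tsum_eq]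
  refine tsum_congr fun p => ?_
  simp only [thetaTerm, Equiv.subRight_apply, Prod.fst_sub, Prod.snd_sub]
  congr 1
  push_cast
  ring

theorem constants_relations_10 (τ₁ τ₂ τ₁₂ : ℂ)
    (hτ₁ : 0 < τ₁.im) (hτ₂ : 0 < τ₂.im) (hτ : τ₁₂.im ^ 2 < τ₁.im * τ₂.im) :
    theta τ₁ τ₂ τ₁₂ 0 0 1 0 0 0 * theta τ₁ τ₂ τ₁₂ 0 0 0 0 0 0 =
        Theta2 τ₁ τ₂ τ₁₂ 0 0 1 0 0 0 ^ 2 + Theta2 τ₁ τ₂ τ₁₂ 0 1 1 0 0 0 ^ 2 ∧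
      theta τ₁ τ₂ τ₁₂ 0 1 1 0 0 0 * theta τ₁ τ₂ τ₁₂ 0 1 0 0 0 0 =
        2 * Theta2 τ₁ τ₂ τ₁₂ 0 0 1 0 0 0 * Theta2 τ₁ τ₂ τ₁₂ 0 1 1 0 0 0 := by
  have hodd (c : ℤ) : Theta2 τ₁ τ₂ τ₁₂ 1 c 1 0 0 0 = 0 := by
    simpa [Theta2] using theta_eq_zero_of_odd (2 * τ₁) (2 * τ₂) (2 * τ₁₂) 1 c 1 0 (by simp)
  have h₁₀ : Theta2 τ₁ τ₂ τ₁₂ 1 0 1 0 0 0 = 0 := by simpa using hodd 0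
  have h₁₁ : Theta2 τ₁ τ₂ τ₁₂ 1 1 1 0 0 0 = 0 := by simpa using hodd 1
  have h₁₂ : Theta2 τ₁ τ₂ τ₁₂ 1 2 1 0 0 0 = 0 := by simpa using hodd 2
  have hshift : Theta2 τ₁ τ₂ τ₁₂ 0 2 1 0 0 0 = Theta2 τ₁ τ₂ τ₁₂ 0 0 1 0 0 0 := by
    simpa [Theta2] using theta_add_two_mul (2 * τ₁) (2 * τ₂) (2 * τ₁₂) 0 0 1 0 0 0 0 1
  constructor
  · norm_num [theta_mul_theta hτ₁ hτ₂ hτ, Fintype.sum_prod_type, h₁₀, h₁₁]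
    ring
  · norm_num [theta_mul_theta hτ₁ hτ₂ hτ, Fintype.sum_prod_type, h₁₀, h₁₁, h₁₂, hshift]
    ring
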